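/- For all integers n, m with 0 < m < n, the polynomials Φ_{n,r}^⊥, r = 0,…,n−1, are pairwise orthogonal with respect to the Chebyshev weight, with ⟨Φ_{n,r}^⊥, Φ_{n,s}^⊥⟩ = δ_{r,s}·ν_{n,r}^m for all r, s = 0,…,n−1, where ν_{n,r}^m = 1 if 0 ≤ r ≤ n−m and ν_{n,r}^m = (m² + (n−r)²)/(2m²) if n−m < r < n. -/

import Mathlib

open Real MeasureTheory Finset

/-- Chebyshev nodes of the first kind: `x_k^n = cos((2k-1)π/(2n))`. -/
noncomputable def chebNode (n k : ℕ) : ℝ :=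
  Real.cos ((2 * (k : ℝ) - 1) * Real.pi / (2 * (n : ℝ)))

/-- Orthonormal Chebyshev polynomials of the first kind. -/
noncomputable def chebP (r : ℕ) (x : ℝ) : ℝ :=
  if r = 0 then Real.sqrt (1 / Real.pi)
  else Real.sqrt (2 / Real.pi) * Real.cos ((r : ℝ) * Real.arccos x)

/-- Darboux kernel `K_r(x,y) = Σ_{s=0}^r p_s(x) p_s(y)`. -/
noncomputable def darboux (r : ℕ) (x y : ℝ) : ℝ :=
  ∑ s ∈ Finset.range (r + 1), chebP s x * chebP s y

/-- de la Vallée Poussin kernel `v_n^m(x,y) = (1/(2m)) Σ_{r=n-m}^{n+m-1} K_r(x,y)`. -/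
noncomputable def vpK (n m : ℕ) (x y : ℝ) : ℝ :=
  (1 / (2 * (m : ℝ))) * ∑ r ∈ Finset.Icc (n - m) (n + m - 1), darboux r x y

/-- The Chebyshev weight `w(x) = 1/√(1-x²)`. -/
noncomputable def chebW (x : ℝ) : ℝ := 1 / Real.sqrt (1 - x ^ 2)

/-- Scaling functions `Φ_{n,k}^m(x) = (π/n) v_n^m(x_k^n, x)`. -/
noncomputable def scal (n m k : ℕ) (x : ℝ) : ℝ :=
  (Real.pi / (n : ℝ)) * vpK n m (chebNode n k) x

/-- The nodes `y_k^n`, `k = 1,…,2n`: the Chebyshev nodes of order `3n` not of order `n`. -/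
noncomputable def yNode (n k : ℕ) : ℝ := chebNode (3 * n) (3 * k / 2)

/-- Wavelet functions `ψ_{n,k}^m`. -/
noncomputable def wav (n m k : ℕ) (x : ℝ) : ℝ :=
  (Real.pi / (3 * (n : ℝ))) * vpK (3 * n) m (yNode n k) x -
    ∑ h ∈ Finset.Icc 1 n,
      scal n m h (yNode n k) * ((Real.pi / (3 * (n : ℝ))) * vpK (3 * n) m (chebNode n h) x)

/-- Filter coefficients `μ_{n,r}^m`. -/
noncomputable def muC (n m r : ℕ) : ℝ :=
  if r ≤ n - m then 1
  else if r < n + m then ((m : ℝ) + (n : ℝ) - (r : ℝ)) / (2 * (m : ℝ))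
  else 0

/-- Squared norms `ν_{n,r}^m` of the orthogonal scaling basis. -/
noncomputable def nuC (n m r : ℕ) : ℝ :=
  if r ≤ n - m then 1 else ((m : ℝ) ^ 2 + ((n : ℝ) - (r : ℝ)) ^ 2) / (2 * (m : ℝ) ^ 2)

/-- Orthogonal scaling basis `Φ_{n,r}^⊥`. -/
noncomputable def scalPerp (n m r : ℕ) (x : ℝ) : ℝ :=
  if r ≤ n - m then chebP r x
  else muC n m r * chebP r x - muC n m (2 * n - r) * chebP (2 * n - r) x

/-- The sup norm on `[-1,1]`. -/
noncomputable def supNorm (f : ℝ → ℝ) : ℝ := ⨆ x : Set.Icc (-1 : ℝ) 1, |f x|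

/-- The Lebesgue constant `c_∞ = max_{|x|≤1} ∫_{-1}^1 |v_n^m(x,y)| w(y) dy`. -/
noncomputable def cInf (n m : ℕ) : ℝ :=
  ⨆ x : Set.Icc (-1 : ℝ) 1, ∫ y in (-1 : ℝ)..1, |vpK n m x y| * chebW y



lemma chebW_meas : Measurable chebW := by
  have h : Measurable fun x : ℝ => Real.sqrt (1 - x ^ 2) :=
    (Real.continuous_sqrt.comp (by continuity)).measurable
  exact measurable_const.div h

lemma chebW_nonneg (x : ℝ) : 0 ≤ chebW x := by
  unfold chebW; positivity

lemma rpow_half_inv_sqrt {y : ℝ} (hy : 0 ≤ y) : y ^ (-(1/2) : ℝ) = 1 / Real.sqrt y := by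
  rw [Real.rpow_neg hy, Real.sqrt_eq_rpow]; exact (one_div _).symm

lemma chebW_intInt : IntervalIntegrable chebW volume (-1 : ℝ) 1 := by
  have h1 : IntervalIntegrable (fun x : ℝ => (1 - x) ^ (-(1/2) : ℝ)) volume (-1 : ℝ) 1 := by
    have := ((intervalIntegral.intervalIntegrable_rpow' (a := 0) (b := 2)
      (r := (-(1/2) : ℝ)) (by norm_num)).comp_sub_left 1).symm
    norm_num at this ⊢
    exact this
  have h2 : IntervalIntegrable (fun x : ℝ => (1 + x) ^ (-(1/2) : ℝ)) volume (-1 : ℝ) 1 := by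
    have := (intervalIntegral.intervalIntegrable_rpow' (a := 0) (b := 2)
      (r := (-(1/2) : ℝ)) (by norm_num)).comp_add_right 1
    norm_num at this ⊢
    convert this using 2
    ring
  have hsum := h1.add h2
  apply hsum.mono_fun chebW_meas.aestronglyMeasurable
  filter_upwards with x
  simp only [Real.norm_eq_abs]
  rcases le_or_gt x (-1) with hx | hx
  · have h0 : chebW x = 0 := by
      unfold chebW
      rw [Real.sqrt_eq_zero_of_nonpos (by nlinarith)]
      simp
    rw [h0, abs_zero]; exact abs_nonneg _
  rcases le_or_gt 1 x with hx2 | hx2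
  · have h0 : chebW x = 0 := by
      unfold chebW
      rw [Real.sqrt_eq_zero_of_nonpos (by nlinarith)]
      simp
    rw [h0, abs_zero]; exact abs_nonneg _
  · have hp : 0 < 1 - x := by linarith
    have hq : 0 < 1 + x := by linarith
    have hfac : Real.sqrt (1 - x ^ 2) = Real.sqrt (1 - x) * Real.sqrt (1 + x) := by
      rw [← Real.sqrt_mul hp.le]; ring_nf
    have hcw : chebW x = 1 / (Real.sqrt (1 - x) * Real.sqrt (1 + x)) := by
      unfold chebW; rw [hfac]
    have s1 : 0 < Real.sqrt (1 - x) := Real.sqrt_pos.mpr hp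
    have s2 : 0 < Real.sqrt (1 + x) := Real.sqrt_pos.mpr hq
    rw [abs_of_nonneg (chebW_nonneg x), abs_of_nonneg (by
      rw [rpow_half_inv_sqrt hp.le, rpow_half_inv_sqrt hq.le]; positivity), hcw,
      rpow_half_inv_sqrt hp.le, rpow_half_inv_sqrt hq.le]
    have e1 := Real.sq_sqrt hp.le
    have e2 := Real.sq_sqrt hq.le
    rcases le_or_gt 0 x with h0 | h0
    · have hb : 1 ≤ Real.sqrt (1 + x) := by nlinarith
      calc 1 / (Real.sqrt (1 - x) * Real.sqrt (1 + x)) ≤ 1 / Real.sqrt (1 - x) := by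
            rw [div_le_div_iff₀ (by positivity) s1]; nlinarith
        _ ≤ 1 / Real.sqrt (1 - x) + 1 / Real.sqrt (1 + x) :=
            le_add_of_nonneg_right (by positivity)
    · have hb : 1 ≤ Real.sqrt (1 - x) := by nlinarith
      calc 1 / (Real.sqrt (1 - x) * Real.sqrt (1 + x)) ≤ 1 / Real.sqrt (1 + x) := by
            rw [div_le_div_iff₀ (by positivity) s2]; nlinarith
        _ ≤ 1 / Real.sqrt (1 - x) + 1 / Real.sqrt (1 + x) :=
            le_add_of_nonneg_left (by positivity)

lemma intInt_bdd (g : ℝ → ℝ) (hg : Measurable g) (hb : ∀ x, |g x| ≤ 1) :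
    IntervalIntegrable (fun x => g x * chebW x) volume (-1 : ℝ) 1 := by
  apply chebW_intInt.mono_fun ((hg.mul chebW_meas).aestronglyMeasurable)
  filter_upwards with x
  simp only [Real.norm_eq_abs, Pi.mul_apply, abs_mul]
  rw [abs_of_nonneg (chebW_nonneg x)]
  calc |g x| * chebW x ≤ 1 * chebW x :=
        mul_le_mul_of_nonneg_right (hb x) (chebW_nonneg x)
    _ = chebW x := one_mul _

lemma cos_arccos_meas (k : ℕ) : Measurable fun x : ℝ => Real.cos (k * Real.arccos x) :=
  (Real.continuous_cos.comp (continuous_const.mul Real.continuous_arccos)).measurable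

lemma cos_int (k : ℕ) :
    (∫ x in (-1:ℝ)..1, Real.cos (k * Real.arccos x) * chebW x) = if k = 0 then π else 0 := by
  have hint : IntervalIntegrable (fun x => Real.cos (k * Real.arccos x) * chebW x)
      volume (-1 : ℝ) 1 := intInt_bdd _ (cos_arccos_meas k) (fun x => Real.abs_cos_le_one _)
  rcases Nat.eq_zero_or_pos k with hk | hk
  · subst hk
    simp only [Nat.cast_zero, zero_mul, Real.cos_zero, one_mul, if_pos rfl]
    have := intervalIntegral.integral_eq_sub_of_hasDeriv_right_of_le (f := Real.arcsin)
      (f' := chebW) (by norm_num) (Real.continuous_arcsin.continuousOn)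
      (fun x hx => (Real.hasDerivAt_arcsin (ne_of_gt hx.1) (ne_of_lt hx.2)).hasDerivWithinAt)
      (by simpa using hint)
    rw [this, Real.arcsin_one, Real.arcsin_neg_one]
    norm_num
  · rw [if_neg hk.ne']
    have hk0 : (k : ℝ) ≠ 0 := Nat.cast_ne_zero.mpr hk.ne'
    have := intervalIntegral.integral_eq_sub_of_hasDeriv_right_of_le
      (f := fun x => -(1/(k:ℝ)) * Real.sin (k * Real.arccos x))
      (f' := fun x => Real.cos (k * Real.arccos x) * chebW x) (by norm_num)
      (continuous_const.mul (Real.continuous_sin.comp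
        (continuous_const.mul Real.continuous_arccos))).continuousOn ?_ hint
    · rw [this]
      simp [Real.arccos_one, Real.arccos_neg_one, Real.sin_nat_mul_pi]
    · intro x hx
      have h := Real.hasDerivAt_arccos (ne_of_gt hx.1) (ne_of_lt hx.2)
      have h2 : HasDerivAt (fun x => Real.sin ((k:ℝ) * Real.arccos x))
          (Real.cos ((k:ℝ) * Real.arccos x) * ((k:ℝ) * (-(1 / Real.sqrt (1 - x ^ 2))))) x :=
        (h.const_mul (k:ℝ)).sin
      have h3 := h2.const_mul (-(1/(k:ℝ)))
      convert h3.hasDerivWithinAt using 1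
      unfold chebW
      field_simp

noncomputable def chebC (r : ℕ) : ℝ :=
  if r = 0 then Real.sqrt (1 / Real.pi) else Real.sqrt (2 / Real.pi)

lemma chebP_eq (r : ℕ) (x : ℝ) :
    chebP r x = chebC r * Real.cos ((r : ℝ) * Real.arccos x) := by
  unfold chebP chebC
  rcases eq_or_ne r 0 with h | h <;> simp [h]

lemma chebP_meas (r : ℕ) : Measurable (chebP r) := by
  rcases eq_or_ne r 0 with h | h
  · have e : chebP r = fun _ => Real.sqrt (1 / Real.pi) := by
      funext x; simp [chebP, h]
    rw [e]; exact measurable_const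
  · have e : chebP r = fun x => Real.sqrt (2 / Real.pi) * Real.cos ((r:ℝ) * Real.arccos x) := by
      funext x; simp [chebP, h]
    rw [e]; exact measurable_const.mul (cos_arccos_meas r)

lemma chebC_nonneg (r : ℕ) : 0 ≤ chebC r := by
  unfold chebC; split <;> positivity

lemma chebC_le_one (r : ℕ) : chebC r ≤ 1 := by
  have hπ := Real.pi_gt_three
  unfold chebC
  have h1 : Real.sqrt (1 / Real.pi) ≤ 1 := by
    calc Real.sqrt (1 / Real.pi) ≤ Real.sqrt 1 :=
          Real.sqrt_le_sqrt (by rw [div_le_one (by linarith)]; linarith)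
      _ = 1 := Real.sqrt_one
  have h2 : Real.sqrt (2 / Real.pi) ≤ 1 := by
    calc Real.sqrt (2 / Real.pi) ≤ Real.sqrt 1 :=
          Real.sqrt_le_sqrt (by rw [div_le_one (by linarith)]; linarith)
      _ = 1 := Real.sqrt_one
  split <;> assumption

lemma chebP_abs_le (r : ℕ) (x : ℝ) : |chebP r x| ≤ 1 := by
  rw [chebP_eq, abs_mul, abs_of_nonneg (chebC_nonneg r)]
  calc chebC r * |Real.cos ((r:ℝ) * Real.arccos x)| ≤ 1 * 1 :=
        mul_le_mul (chebC_le_one r) (Real.abs_cos_le_one _) (abs_nonneg _) (by norm_num)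
    _ = 1 := one_mul 1

lemma chebP_prod_intInt (r s : ℕ) :
    IntervalIntegrable (fun x => chebP r x * chebP s x * chebW x) volume (-1 : ℝ) 1 := by
  apply intInt_bdd _ ((chebP_meas r).mul (chebP_meas s))
  intro x
  rw [Pi.mul_apply, abs_mul]
  calc |chebP r x| * |chebP s x| ≤ 1 * 1 :=
        mul_le_mul (chebP_abs_le r x) (chebP_abs_le s x) (abs_nonneg _) (by norm_num)
    _ = 1 := one_mul 1

lemma chebP_orth (r s : ℕ) :
    (∫ x in (-1:ℝ)..1, chebP r x * chebP s x * chebW x) = if r = s then 1 else 0 := by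
  -- reduce by symmetry to s ≤ r
  suffices H : ∀ r s : ℕ, s ≤ r →
      (∫ x in (-1:ℝ)..1, chebP r x * chebP s x * chebW x) = if r = s then 1 else 0 by
    rcases le_total s r with h | h
    · exact H r s h
    · rw [intervalIntegral.integral_congr
        (g := fun x => chebP s x * chebP r x * chebW x) (fun x _ => by ring), H s r h]
      rcases eq_or_ne r s with he | he
      · simp [he]
      · simp [he, Ne.symm he]
  intro r s hsr
  have key : ∀ x : ℝ, chebP r x * chebP s x * chebW x =
      chebC r * chebC s * (1/2) *
        (Real.cos (((r+s:ℕ):ℝ) * Real.arccos x) * chebW x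
          + Real.cos (((r-s:ℕ):ℝ) * Real.arccos x) * chebW x) := by
    intro x
    rw [chebP_eq, chebP_eq]
    have hcast : ((r-s:ℕ):ℝ) = (r:ℝ) - (s:ℝ) := by
      push_cast [Nat.cast_sub hsr]; ring
    rw [hcast]
    push_cast
    have := Real.cos_add_cos (((r:ℝ)+(s:ℝ)) * Real.arccos x) (((r:ℝ)-(s:ℝ)) * Real.arccos x)
    have h2 : (((r:ℝ)+s) * Real.arccos x + ((r:ℝ)-s) * Real.arccos x) / 2
        = (r:ℝ) * Real.arccos x := by ring
    have h3 : (((r:ℝ)+s) * Real.arccos x - ((r:ℝ)-s) * Real.arccos x) / 2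
        = (s:ℝ) * Real.arccos x := by ring
    rw [h2, h3] at this
    linear_combination (-(chebC r * chebC s * chebW x) / 2) * this
  rw [intervalIntegral.integral_congr (g := fun x => chebC r * chebC s * (1/2) *
        (Real.cos (((r+s:ℕ):ℝ) * Real.arccos x) * chebW x
          + Real.cos (((r-s:ℕ):ℝ) * Real.arccos x) * chebW x)) (fun x _ => key x)]
  have i1 := intInt_bdd _ (cos_arccos_meas (r+s)) (fun x => Real.abs_cos_le_one _)
  have i2 := intInt_bdd _ (cos_arccos_meas (r-s)) (fun x => Real.abs_cos_le_one _)
  rw [intervalIntegral.integral_const_mul, intervalIntegral.integral_add i1 i2,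
    cos_int, cos_int]
  rcases eq_or_ne r s with h | h
  · subst h
    rcases eq_or_ne r 0 with h0 | h0
    · subst h0
      rw [show chebC 0 * chebC 0 = 1/π from by
        simp only [chebC, if_pos rfl]; exact Real.mul_self_sqrt (by positivity)]
      field_simp
      norm_num
    · rw [if_neg (by omega : r + r ≠ 0), if_pos (Nat.sub_self r), if_pos rfl]
      simp only [chebC, if_neg h0]
      rw [Real.mul_self_sqrt (by positivity : (0:ℝ) ≤ 2/π)]
      field_simp
      ring
  · have h1 : r + s ≠ 0 := by omega
    have h2 : r - s ≠ 0 := by omega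
    rw [if_neg h1, if_neg h2, if_neg h]
    ring

lemma comb (a b c d : ℝ) (r r' s s' : ℕ) :
    (∫ x in (-1:ℝ)..1,
        (a * chebP r x - b * chebP r' x) * (c * chebP s x - d * chebP s' x) * chebW x)
    = a*c*(if r = s then (1:ℝ) else 0) - a*d*(if r = s' then (1:ℝ) else 0)
      - b*c*(if r' = s then (1:ℝ) else 0) + b*d*(if r' = s' then (1:ℝ) else 0) := by
  have e : ∀ x : ℝ, (a * chebP r x - b * chebP r' x) * (c * chebP s x - d * chebP s' x) * chebW x
      = ((a*c*(chebP r x * chebP s x * chebW x) - a*d*(chebP r x * chebP s' x * chebW x))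
        - b*c*(chebP r' x * chebP s x * chebW x)) + b*d*(chebP r' x * chebP s' x * chebW x) := by
    intro x; ring
  rw [intervalIntegral.integral_congr (fun x _ => e x)]
  have I1 := (chebP_prod_intInt r s).const_mul (a*c)
  have I2 := (chebP_prod_intInt r s').const_mul (a*d)
  have I3 := (chebP_prod_intInt r' s).const_mul (b*c)
  have I4 := (chebP_prod_intInt r' s').const_mul (b*d)
  rw [intervalIntegral.integral_add ((I1.sub I2).sub I3) I4,
    intervalIntegral.integral_sub (I1.sub I2) I3, intervalIntegral.integral_sub I1 I2,
    intervalIntegral.integral_const_mul, intervalIntegral.integral_const_mul,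
    intervalIntegral.integral_const_mul, intervalIntegral.integral_const_mul,
    chebP_orth, chebP_orth, chebP_orth, chebP_orth]

theorem scalPerp_orthogonal (n m : ℕ) (hm : 0 < m) (hmn : m < n)
    (r s : ℕ) (hr : r < n) (hs : s < n) :
    (∫ x in (-1 : ℝ)..1, scalPerp n m r x * scalPerp n m s x * chebW x) =
      if r = s then nuC n m r else 0 := by
  by_cases h1 : r ≤ n - m <;> by_cases h2 : s ≤ n - m
  · rw [intervalIntegral.integral_congr (g := fun x => chebP r x * chebP s x * chebW x)
      (fun x _ => by simp [scalPerp, h1, h2]), chebP_orth]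
    rcases eq_or_ne r s with h | h
    · simp [h, nuC, h2]
    · simp [h]
  · have hrs : r ≠ s := by omega
    have hrs' : r ≠ 2 * n - s := by omega
    rw [intervalIntegral.integral_congr (g := fun x =>
        (1 * chebP r x - 0 * chebP r x) *
        (muC n m s * chebP s x - muC n m (2*n - s) * chebP (2*n - s) x) * chebW x)
      (fun x _ => by simp [scalPerp, h1, h2]), comb, if_neg hrs, if_neg hrs', if_neg hrs]
    ring
  · have hrs : r ≠ s := by omega
    have hrs' : 2 * n - r ≠ s := by omega
    rw [intervalIntegral.integral_congr (g := fun x =>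
        (muC n m r * chebP r x - muC n m (2*n - r) * chebP (2*n - r) x) *
        (1 * chebP s x - 0 * chebP s x) * chebW x)
      (fun x _ => by simp [scalPerp, h1, h2]), comb, if_neg hrs, if_neg hrs, if_neg hrs']
    ring
  · rw [intervalIntegral.integral_congr (g := fun x =>
        (muC n m r * chebP r x - muC n m (2*n - r) * chebP (2*n - r) x) *
        (muC n m s * chebP s x - muC n m (2*n - s) * chebP (2*n - s) x) * chebW x)
      (fun x _ => by simp [scalPerp, h1, h2]), comb]
    have hc1 : r ≠ 2 * n - s := by omega
    have hc2 : 2 * n - r ≠ s := by omega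
    have hc3 : (2 * n - r = 2 * n - s) ↔ r = s := by omega
    rcases eq_or_ne r s with h | h
    · subst h
      rw [if_pos rfl, if_neg hc1, if_neg hc2, if_pos (hc3.mpr rfl), if_pos rfl]
      have hmu1 : muC n m r = ((m:ℝ) + (n:ℝ) - (r:ℝ)) / (2 * (m:ℝ)) := by
        unfold muC; rw [if_neg h1, if_pos (by omega : r < n + m)]
      have hmu2 : muC n m (2*n - r) = ((m:ℝ) + (n:ℝ) - (2*(n:ℝ) - (r:ℝ))) / (2 * (m:ℝ)) := by
        unfold muC
        rw [if_neg (by omega : ¬ (2*n - r ≤ n - m)), if_pos (by omega : 2*n - r < n + m),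
          Nat.cast_sub (by omega : r ≤ 2*n)]
        push_cast
        ring_nf
      have hnu : nuC n m r = ((m:ℝ)^2 + ((n:ℝ) - (r:ℝ))^2) / (2 * (m:ℝ)^2) := by
        unfold nuC; rw [if_neg h1]
      rw [hmu1, hmu2, hnu]
      have hm0 : (m:ℝ) ≠ 0 := Nat.cast_ne_zero.mpr hm.ne'
      field_simp
      ring
    · rw [if_neg h, if_neg hc1, if_neg hc2, if_neg (fun hh => h (hc3.mp hh)), if_neg h]
      ring
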